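/- Let f: [0,π]×ℝ → ℝ be measurable in the first variable with |f(z,y)| ≤ h(z)·g(|y|) for a.e. z and all y, where h ∈ L²(0,π) is positive and g: ℝ₊ → ℝ₊ is continuous and increasing. Define F(x)(z) = −x(z)x'(z) + f(z,x(z)) for x ∈ H¹₀(0,π). Then F(x) ∈ L²(0,π) and ‖F(x)‖_{L²(0,π)} ≤ √(2π)·‖x‖²_{1/2} + √2·‖h‖_{L²}·g(√π·‖x‖_{1/2}). -/

import Mathlib

open MeasureTheory Set Real

/-!
Since `x 0 = 0`, `x z = ∫₀ᶻ x'`, and Cauchy–Schwarz gives `|x z| ≤ √π ‖x'‖₂ =: M`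
on `[0, π]`.
Monotonicity of `g` then bounds `|F x| ≤ M |x'| + g M · h`, so
`∫ (F x)² ≤ 2 M² ‖x'‖₂² + 2 g(M)² ‖h‖₂²`, which also shows `F x ∈ L²`;
the estimate follows from `√(a + b) ≤ √a + √b`.
-/

lemma integral_abs_le_sqrt_measureReal_mul_sqrt_integral_sq {α : Type*} [MeasurableSpace α]
    {μ : Measure α} [IsFiniteMeasure μ] {u : α → ℝ} (hu : MemLp u 2 μ) :
    ∫ t, |u t| ∂μ ≤ √(μ.real univ) * √(∫ t, u t ^ 2 ∂μ) := by
  have hholder := integral_mul_le_Lp_mul_Lq_of_nonneg HolderConjugate.two_two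
    (f := fun _ => (1 : ℝ)) (g := fun t => |u t|) (μ := μ)
    (Filter.Eventually.of_forall fun _ => zero_le_one)
    (Filter.Eventually.of_forall fun t => abs_nonneg (u t))
    (by simpa using memLp_const (μ := μ) (p := 2) (1 : ℝ))
    (by rw [ENNReal.ofReal_ofNat]; exact hu.abs)
  simpa [sqrt_eq_rpow, one_div] using hholder

lemma memLp_two_restrict_Ioc_of_hasDerivAt {x x' : ℝ → ℝ} {a b : ℝ} (hab : a ≤ b)
    (hd : ∀ t ∈ Icc a b, HasDerivAt x (x' t) t)
    (hsq : IntervalIntegrable (fun t => x' t ^ 2) volume a b) :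
    MemLp x' 2 (volume.restrict (Ioc a b)) := by
  have hmeas : AEStronglyMeasurable x' (volume.restrict (Ioc a b)) :=
    (measurable_deriv x).aestronglyMeasurable.congr <|
      (ae_restrict_mem measurableSet_Ioc).mono fun t ht =>
        (hd t (Ioc_subset_Icc_self ht)).deriv
  exact (memLp_two_iff_integrable_sq hmeas).2
    ((intervalIntegrable_iff_integrableOn_Ioc_of_le hab).1 hsq)

lemma abs_le_sqrt_mul_sqrt_integral_sq_of_hasDerivAt {x x' : ℝ → ℝ} {a b z : ℝ}
    (hxa : x a = 0) (hd : ∀ t ∈ Icc a b, HasDerivAt x (x' t) t)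
    (hsq : IntervalIntegrable (fun t => x' t ^ 2) volume a b) (hz : z ∈ Icc a b) :
    |x z| ≤ √(b - a) * √(∫ t in a..b, x' t ^ 2) := by
  have hab : a ≤ b := hz.1.trans hz.2
  have hL2 : MemLp x' 2 (volume.restrict (Ioc a z)) :=
    (memLp_two_restrict_Ioc_of_hasDerivAt hab hd hsq).mono_measure
      (Measure.restrict_mono (Ioc_subset_Ioc_right hz.2) le_rfl)
  have hftc : x z = ∫ t in a..z, x' t := by
    rw [intervalIntegral.integral_eq_sub_of_hasDerivAt
      (fun t ht => hd t (Icc_subset_Icc_right hz.2 (uIcc_of_le hz.1 ▸ ht)))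
      ((intervalIntegrable_iff_integrableOn_Ioc_of_le hz.1).2 (hL2.integrable one_le_two)),
      hxa, sub_zero]
  have hmono : ∫ t in Ioc a z, x' t ^ 2 ≤ ∫ t in Ioc a b, x' t ^ 2 :=
    setIntegral_mono_set ((intervalIntegrable_iff_integrableOn_Ioc_of_le hab).1 hsq)
      (Filter.Eventually.of_forall fun t => sq_nonneg _) (Ioc_subset_Ioc_right hz.2).eventuallyLE
  calc |x z| ≤ ∫ t in Ioc a z, |x' t| := by
        rw [hftc, intervalIntegral.integral_of_le hz.1]; exact abs_integral_le_integral_abs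
    _ ≤ √(z - a) * √(∫ t in Ioc a z, x' t ^ 2) := by
        simpa [volume_Ioc, hz.1] using
          integral_abs_le_sqrt_measureReal_mul_sqrt_integral_sq hL2
    _ ≤ √(b - a) * √(∫ t in a..b, x' t ^ 2) := by
        rw [intervalIntegral.integral_of_le hab]
        gcongr
        exact hz.2

lemma memLp_two_and_integral_sq_le_of_sq_le {α : Type*} [MeasurableSpace α] {μ : Measure α}
    {F G : α → ℝ} (hF : AEStronglyMeasurable F μ) (hG : Integrable G μ)
    (hFG : ∀ᵐ t ∂μ, F t ^ 2 ≤ G t) :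
    MemLp F 2 μ ∧ ∫ t, F t ^ 2 ∂μ ≤ ∫ t, G t ∂μ := by
  have hF2 : Integrable (fun t => F t ^ 2) μ :=
    hG.mono' (hF.pow 2) (hFG.mono fun t ht => by rwa [norm_of_nonneg (sq_nonneg _)])
  exact ⟨(memLp_two_iff_integrable_sq hF).2 hF2, integral_mono_ae hF2 hG hFG⟩

lemma sqrt_le_of_le_two_mul_sq_add_two_mul_sq {J p q a c : ℝ} (hp : 0 ≤ p) (hq : 0 ≤ q)
    (ha : 0 ≤ a) (hc : 0 ≤ c) (hJ : J ≤ 2 * p * a ^ 2 + 2 * q * c ^ 2) :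
    √J ≤ √(2 * p) * a + √2 * √q * c := by
  have hcross : 0 ≤ √(2 * p) * a * (√2 * √q * c) := by positivity
  rw [sqrt_le_left (by positivity)]
  calc J ≤ 2 * p * a ^ 2 + 2 * q * c ^ 2 := hJ
    _ ≤ √(2 * p) ^ 2 * a ^ 2 + √2 ^ 2 * √q ^ 2 * c ^ 2
          + 2 * (√(2 * p) * a * (√2 * √q * c)) := by
      rw [sq_sqrt (by positivity), sq_sqrt zero_le_two, sq_sqrt hq]; linarith
    _ = (√(2 * p) * a + √2 * √q * c) ^ 2 := by ring

lemma sq_neg_mul_add_le {u v w M c : ℝ} (hu : |u| ≤ M) (hv : |v| ≤ c) :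
    (-(u * w) + v) ^ 2 ≤ 2 * M ^ 2 * w ^ 2 + 2 * c ^ 2 := by
  have huw : (u * w) ^ 2 ≤ M ^ 2 * w ^ 2 := by
    rw [mul_pow, ← sq_abs u]; gcongr
  have hvc : v ^ 2 ≤ c ^ 2 := by
    rw [← sq_abs]; gcongr
  nlinarith [add_sq_le (a := -(u * w)) (b := v), neg_sq (u * w)]

theorem stmt2_general (f : ℝ → ℝ → ℝ) (h g : ℝ → ℝ) (x x' : ℝ → ℝ)
    (hbound : ∀ᵐ z ∂(volume.restrict (Ioo 0 Real.pi)), ∀ y : ℝ, |f z y| ≤ h z * g |y|)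
    (hh : MemLp h 2 (volume.restrict (Ioo 0 Real.pi)))
    (hhpos : ∀ z, 0 < h z)
    (hgmono : Monotone g) (hgpos : ∀ r, 0 < g r)
    (hx0 : x 0 = 0)
    (hd : ∀ z ∈ Icc (0:ℝ) Real.pi, HasDerivAt x (x' z) z)
    (hsq : IntervalIntegrable (fun z => (x' z)^2) volume 0 Real.pi)
    (hFmeas : AEStronglyMeasurable (fun z => -(x z * x' z) + f z (x z))
        (volume.restrict (Ioo 0 Real.pi))) :
    MemLp (fun z => -(x z * x' z) + f z (x z)) 2 (volume.restrict (Ioo 0 Real.pi)) ∧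
    Real.sqrt (∫ z in (0:ℝ)..Real.pi, (-(x z * x' z) + f z (x z))^2)
      ≤ Real.sqrt (2*Real.pi) * (Real.sqrt (∫ z in (0:ℝ)..Real.pi, (x' z)^2))^2
        + Real.sqrt 2 * Real.sqrt (∫ z in (0:ℝ)..Real.pi, (h z)^2)
          * g (Real.sqrt Real.pi * Real.sqrt (∫ z in (0:ℝ)..Real.pi, (x' z)^2)) := by
  have hIoo (u : ℝ → ℝ) : ∫ z in (0:ℝ)..π, u z = ∫ z in Ioo 0 π, u z := by
    rw [intervalIntegral.integral_of_le pi_pos.le, integral_Ioc_eq_integral_Ioo]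
  set I := ∫ z in (0:ℝ)..π, x' z ^ 2
  have hI : 0 ≤ I := intervalIntegral.integral_nonneg pi_pos.le fun _ _ => sq_nonneg _
  set M := √π * √I
  have hM : M ^ 2 = π * I := by rw [mul_pow, sq_sqrt pi_pos.le, sq_sqrt hI]
  have hx'L2 : MemLp x' 2 (volume.restrict (Ioo 0 π)) :=
    (memLp_two_restrict_Ioc_of_hasDerivAt pi_pos.le hd hsq).mono_measure
      (Measure.restrict_mono Ioo_subset_Ioc_self le_rfl)
  have hpointwise : ∀ᵐ z ∂(volume.restrict (Ioo 0 π)), (-(x z * x' z) + f z (x z)) ^ 2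
      ≤ 2 * M ^ 2 * x' z ^ 2 + 2 * g M ^ 2 * h z ^ 2 := by
    filter_upwards [hbound, ae_restrict_mem measurableSet_Ioo] with z hbz hz
    have hxz : |x z| ≤ M := by
      simpa using
        abs_le_sqrt_mul_sqrt_integral_sq_of_hasDerivAt hx0 hd hsq (Ioo_subset_Icc_self hz)
    have hfz : |f z (x z)| ≤ h z * g M :=
      (hbz _).trans (mul_le_mul_of_nonneg_left (hgmono hxz) (hhpos z).le)
    exact (sq_neg_mul_add_le hxz hfz).trans_eq (by ring)
  obtain ⟨hmem, hint⟩ := memLp_two_and_integral_sq_le_of_sq_le hFmeas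
    ((hx'L2.integrable_sq.const_mul _).add (hh.integrable_sq.const_mul _)) hpointwise
  refine ⟨hmem, ?_⟩
  rw [sq_sqrt hI]
  refine sqrt_le_of_le_two_mul_sq_add_two_mul_sq pi_pos.le
    (intervalIntegral.integral_nonneg pi_pos.le fun _ _ => sq_nonneg _) hI (hgpos _).le ?_
  calc ∫ z in (0:ℝ)..π, (-(x z * x' z) + f z (x z)) ^ 2
      = ∫ z in Ioo 0 π, (-(x z * x' z) + f z (x z)) ^ 2 := hIoo _
    _ ≤ ∫ z in Ioo 0 π, (2 * M ^ 2 * x' z ^ 2 + 2 * g M ^ 2 * h z ^ 2) := hint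
    _ = 2 * π * I ^ 2 + 2 * (∫ z in (0:ℝ)..π, h z ^ 2) * g M ^ 2 := by
      rw [integral_add (hx'L2.integrable_sq.const_mul _) (hh.integrable_sq.const_mul _),
        integral_const_mul, integral_const_mul, ← hIoo, ← hIoo, hM]
      ring

theorem stmt2 (f : ℝ → ℝ → ℝ) (h g : ℝ → ℝ) (x x' : ℝ → ℝ)
    (hfmeas : ∀ y : ℝ, Measurable (fun z => f z y))
    (hbound : ∀ᵐ z ∂(volume.restrict (Ioo 0 Real.pi)), ∀ y : ℝ, |f z y| ≤ h z * g |y|)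
    (hh : MemLp h 2 (volume.restrict (Ioo 0 Real.pi)))
    (hhpos : ∀ z, 0 < h z)
    (hgcont : Continuous g) (hgmono : Monotone g) (hgpos : ∀ r, 0 < g r)
    (hx0 : x 0 = 0) (hxpi : x Real.pi = 0)
    (hd : ∀ z ∈ Icc (0:ℝ) Real.pi, HasDerivAt x (x' z) z)
    (hsq : IntervalIntegrable (fun z => (x' z)^2) volume 0 Real.pi)
    (hFmeas : AEStronglyMeasurable (fun z => -(x z * x' z) + f z (x z))
        (volume.restrict (Ioo 0 Real.pi))) :
    MemLp (fun z => -(x z * x' z) + f z (x z)) 2 (volume.restrict (Ioo 0 Real.pi)) ∧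
    Real.sqrt (∫ z in (0:ℝ)..Real.pi, (-(x z * x' z) + f z (x z))^2)
      ≤ Real.sqrt (2*Real.pi) * (Real.sqrt (∫ z in (0:ℝ)..Real.pi, (x' z)^2))^2
        + Real.sqrt 2 * Real.sqrt (∫ z in (0:ℝ)..Real.pi, (h z)^2)
          * g (Real.sqrt Real.pi * Real.sqrt (∫ z in (0:ℝ)..Real.pi, (x' z)^2)) :=
  stmt2_general f h g x x' hbound hh hhpos hgmono hgpos hx0 hd hsq hFmeas
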